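/- arXiv:2601.01496 — 2 statements merged into one kernel-verified Lean document; each statement's English description precedes it below -/
import Mathlib

section
/- The expected reward of a linear contract is non-decreasing in the contract parameter: if α' ≥ α, then Σ_j f_{a*(θ,α'),j} · r_j ≥ Σ_j f_{a*(θ,α),j} · r_j. -/
open Finset

/-- The expected reward of a linear contract is non-decreasing in the contract
parameter: if `α' ≥ α` then `∑ j, f (astar α') j * r j ≥ ∑ j, f (astar α) j * r j`,
where `astar α` is the agent's best response to the linear contract `α`
(maximizing agent utility, ties broken in the principal's favor). -/
theorem expected_reward_nondecreasing
    (n m : ℕ) (hn : 0 < n)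
    (f : Fin n → Fin m → ℝ) (c : Fin n → ℝ) (r : Fin m → ℝ)
    (hf_nonneg : ∀ i j, 0 ≤ f i j) (hf_sum : ∀ i, ∑ j, f i j = 1)
    (hc_nonneg : ∀ i, 0 ≤ c i) (hc_zero : c ⟨0, hn⟩ = 0)
    (hr : ∀ j, r j ∈ Set.Icc (0:ℝ) 1)
    (astar : ℝ → Fin n)
    (h_best : ∀ α : ℝ, ∀ i : Fin n,
      (∑ j, f i j * (α * r j)) - c i ≤ (∑ j, f (astar α) j * (α * r j)) - c (astar α))
    (h_tie : ∀ α : ℝ, ∀ i : Fin n,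
      (∑ j, f i j * (α * r j)) - c i = (∑ j, f (astar α) j * (α * r j)) - c (astar α) →
      ∑ j, f i j * r j ≤ ∑ j, f (astar α) j * r j)
    (α α' : ℝ) (hα : α ∈ Set.Icc (0:ℝ) 1) (hα' : α' ∈ Set.Icc (0:ℝ) 1)
    (hle : α ≤ α') :
    ∑ j, f (astar α) j * r j ≤ ∑ j, f (astar α') j * r j := by
  set a := astar α with ha
  set a' := astar α' with ha'
  have key : ∀ β i, (∑ j, f i j * (β * r j)) = β * ∑ j, f i j * r j := by
    intro β i
    rw [Finset.mul_sum]
    congr 1; ext j; ring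
  have h1 := h_best α a'
  have h2 := h_best α' a
  rw [key, key] at h1 h2
  rcases eq_or_lt_of_le hle with heq | hlt
  · subst heq
    exact le_rfl
  · nlinarith
end

section
/- For any sample S = (θ_1,…,θ_s) of agent types and any 0 < ν < 1, there exists a set C_ν ⊆ [0,1] of linear contracts with |C_ν| ≤ 12/ν such that for every α ∈ [0,1] there exists â ∈ C_ν with (1/s)·Σ_{i=1}^s |u_p(θ_i,α) − u_p(θ_i,â)| ≤ ν. -/
open Finset

lemma cover_aux (s : ℕ) (hs : 0 < s) (R : Fin s → ℝ → ℝ)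
    (hR0 : ∀ i β, 0 ≤ R i β) (hR1 : ∀ i β, R i β ≤ 1)
    (hmono : ∀ i, ∀ β β' : ℝ, β ≤ β' → R i β ≤ R i β')
    (ν : ℝ) (hν0 : 0 < ν) (hν1 : ν < 1) :
    ∃ C : Finset ℝ, ↑C ⊆ Set.Icc (0:ℝ) 1 ∧ (C.card : ℝ) ≤ 12 / ν ∧
      ∀ α ∈ Set.Icc (0:ℝ) 1, ∃ αh ∈ C,
        (1 / (s:ℝ)) * ∑ i, |(1 - α) * R i α - (1 - αh) * R i αh| ≤ ν := by
  have hs' : (0:ℝ) < s := by exact_mod_cast hs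
  set G : ℝ → ℝ := fun β => β + (1/(s:ℝ)) * ∑ i, R i β with hG
  have hGmono : ∀ a b : ℝ, a ≤ b → G a ≤ G b := by
    intro a b hab
    have h0 : ∑ i, R i a ≤ ∑ i, R i b :=
      Finset.sum_le_sum (fun i _ => hmono i a b hab)
    have h1 : (1/(s:ℝ)) * ∑ i, R i a ≤ (1/(s:ℝ)) * ∑ i, R i b :=
      mul_le_mul_of_nonneg_left h0 (by positivity)
    simp only [hG]; linarith
  have hG0 : ∀ β ∈ Set.Icc (0:ℝ) 1, 0 ≤ G β := by
    intro β hβ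
    have h0 : 0 ≤ ∑ i, R i β := Finset.sum_nonneg (fun i _ => hR0 i β)
    have h1 : 0 ≤ (1/(s:ℝ)) * ∑ i, R i β := by positivity
    simp only [hG]; linarith [hβ.1]
  have hG2 : ∀ β ∈ Set.Icc (0:ℝ) 1, G β ≤ 2 := by
    intro β hβ
    have h0 : ∑ i, R i β ≤ ∑ i, (1:ℝ) := Finset.sum_le_sum (fun i _ => hR1 i β)
    simp only [Finset.sum_const, Finset.card_univ, Fintype.card_fin, nsmul_eq_mul,
      smul_eq_mul, mul_one] at h0
    have h1 : (1/(s:ℝ)) * ∑ i, R i β ≤ (1/(s:ℝ)) * s :=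
      mul_le_mul_of_nonneg_left h0 (by positivity)
    have h2 : (1/(s:ℝ)) * (s:ℝ) = 1 := by field_simp
    simp only [hG]; nlinarith [hβ.2]
  -- the ordered bound
  have hbound : ∀ a b : ℝ, a ∈ Set.Icc (0:ℝ) 1 → b ∈ Set.Icc (0:ℝ) 1 → a ≤ b →
      (1/(s:ℝ)) * ∑ i, |(1 - b) * R i b - (1 - a) * R i a| ≤ G b - G a := by
    intro a b ha hb hab
    have hsum : ∑ i, |(1 - b) * R i b - (1 - a) * R i a|
        ≤ ∑ i, ((R i b - R i a) + (b - a)) := by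
      apply Finset.sum_le_sum
      intro i _
      have h1 := hR0 i a; have h2 := hR1 i a
      have h3 := hR0 i b; have h4 := hR1 i b
      have h5 := hmono i a b hab
      rw [abs_le]
      constructor <;> nlinarith [ha.1, ha.2, hb.1, hb.2]
    have heq : ∑ i, ((R i b - R i a) + (b - a))
        = (∑ i, R i b) - (∑ i, R i a) + (s:ℝ) * (b - a) := by
      rw [Finset.sum_add_distrib, Finset.sum_sub_distrib, Finset.sum_const,
        Finset.card_univ, Fintype.card_fin]
      ring
    have h6 : (1/(s:ℝ)) * ∑ i, |(1 - b) * R i b - (1 - a) * R i a|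
        ≤ (1/(s:ℝ)) * ((∑ i, R i b) - (∑ i, R i a) + (s:ℝ) * (b - a)) := by
      rw [← heq]; exact mul_le_mul_of_nonneg_left hsum (by positivity)
    have h7 : (1/(s:ℝ)) * ((∑ i, R i b) - (∑ i, R i a) + (s:ℝ) * (b - a))
        = G b - G a := by
      simp only [hG]; field_simp; ring
    linarith
  -- symmetric version
  have hbound' : ∀ a b : ℝ, a ∈ Set.Icc (0:ℝ) 1 → b ∈ Set.Icc (0:ℝ) 1 →
      (1/(s:ℝ)) * ∑ i, |(1 - a) * R i a - (1 - b) * R i b| ≤ |G a - G b| := by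
    intro a b ha hb
    rcases le_total a b with hab | hab
    · have h := hbound a b ha hb hab
      have e1 : ∑ i, |(1 - a) * R i a - (1 - b) * R i b|
          = ∑ i, |(1 - b) * R i b - (1 - a) * R i a| :=
        Finset.sum_congr rfl (fun i _ => abs_sub_comm _ _)
      have e2 : |G a - G b| = G b - G a := by
        rw [abs_sub_comm, abs_of_nonneg (by linarith [hGmono a b hab])]
      rw [e1, e2]; exact h
    · have h := hbound b a hb ha hab
      have e2 : |G a - G b| = G a - G b :=
        abs_of_nonneg (by linarith [hGmono b a hab])
      rw [e2]; exact h
  -- discretization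
  set key : ℝ → ℤ := fun x => ⌈G x / ν⌉ with hkey
  set K : ℤ := ⌈2 / ν⌉ with hK
  have hkey_mem : ∀ x ∈ Set.Icc (0:ℝ) 1, key x ∈ Finset.Icc (0:ℤ) K := by
    intro x hx
    rw [Finset.mem_Icc]
    refine ⟨Int.ceil_nonneg (div_nonneg (hG0 x hx) hν0.le), ?_⟩
    exact Int.ceil_le_ceil (by gcongr; exact hG2 x hx)
  classical
  set rep : ℤ → ℝ := fun k =>
    if h : ∃ x, x ∈ Set.Icc (0:ℝ) 1 ∧ key x = k then h.choose else 0 with hrep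
  refine ⟨(Finset.Icc (0:ℤ) K).image rep, ?_, ?_, ?_⟩
  · intro x hx
    simp only [Finset.coe_image, Set.mem_image, Finset.mem_coe] at hx
    obtain ⟨k, _, rfl⟩ := hx
    simp only [hrep]
    split
    · next h => exact h.choose_spec.1
    · exact ⟨le_refl 0, zero_le_one⟩
  · have hcard : ((Finset.Icc (0:ℤ) K).image rep).card ≤ (Finset.Icc (0:ℤ) K).card :=
      Finset.card_image_le
    have hKcard : (Finset.Icc (0:ℤ) K).card = (K + 1).toNat := by
      rw [Int.card_Icc]; norm_num
    have hK0 : (0:ℤ) ≤ K := Int.ceil_nonneg (by positivity)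
    have h1 : (((K + 1).toNat : ℤ) : ℝ) = (K:ℝ) + 1 := by
      rw [Int.toNat_of_nonneg (by omega)]; push_cast; ring
    have h2 : (K:ℝ) < 2/ν + 1 := Int.ceil_lt_add_one _
    have h3 : 2/ν + 2 ≤ 12/ν := by
      have h10 : (2:ℝ) ≤ 10/ν := by
        rw [le_div_iff₀ hν0]; nlinarith
      have h12 : 12/ν = 2/ν + 10/ν := by ring
      linarith
    have h4 : (((Finset.Icc (0:ℤ) K).image rep).card : ℝ)
        ≤ (((K + 1).toNat : ℤ) : ℝ) := by
      rw [hKcard] at hcard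
      exact_mod_cast hcard
    rw [h1] at h4
    linarith
  · intro α hα
    have hex : ∃ x, x ∈ Set.Icc (0:ℝ) 1 ∧ key x = key α := ⟨α, hα, rfl⟩
    refine ⟨rep (key α), ?_, ?_⟩
    · exact Finset.mem_image_of_mem rep (hkey_mem α hα)
    · have hrepeq : rep (key α) = hex.choose := by simp only [hrep, dif_pos hex]
      obtain ⟨hmem, hkeq⟩ := hex.choose_spec
      set αh := hex.choose
      rw [hrepeq]
      have hb := hbound' α αh hα hmem
      have hAα : G α / ν ≤ ((key α : ℤ) : ℝ) := by
        simpa only [hkey] using Int.le_ceil (G α / ν)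
      have hBα : ((key α : ℤ) : ℝ) < G α / ν + 1 := by
        simpa only [hkey] using Int.ceil_lt_add_one (G α / ν)
      have hAh : G αh / ν ≤ ((key α : ℤ) : ℝ) := by
        rw [← hkeq]
        simpa only [hkey] using Int.le_ceil (G αh / ν)
      have hBh : ((key α : ℤ) : ℝ) < G αh / ν + 1 := by
        rw [← hkeq]
        simpa only [hkey] using Int.ceil_lt_add_one (G αh / ν)
      have habs : |G α - G αh| ≤ ν := by
        rw [abs_le]
        have e1 : G α ≤ ((key α : ℤ) : ℝ) * ν := (div_le_iff₀ hν0).mp hAα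
        have e2 : (((key α : ℤ) : ℝ) - 1) * ν < G α := by
          have : (((key α : ℤ) : ℝ) - 1) < G α / ν := by linarith
          exact (lt_div_iff₀ hν0).mp this
        have e3 : G αh ≤ ((key α : ℤ) : ℝ) * ν := (div_le_iff₀ hν0).mp hAh
        have e4 : (((key α : ℤ) : ℝ) - 1) * ν < G αh := by
          have : (((key α : ℤ) : ℝ) - 1) < G αh / ν := by linarith
          exact (lt_div_iff₀ hν0).mp this
        constructor <;> nlinarith
      linarith

/-- L1 cover of linear contracts on a sample: for any sample `θ₁, …, θ_s` of agent
types and any `0 < ν < 1`, there is a set `C_ν ⊆ [0,1]` of linear contracts with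
`|C_ν| ≤ 12/ν` such that every `α ∈ [0,1]` has `αh ∈ C_ν` with
`(1/s) ∑ᵢ |u_p(θᵢ,α) - u_p(θᵢ,αh)| ≤ ν`, where
`u_p(θᵢ,β) = (1-β) * ∑ⱼ f i (astar i β) j * r j`. -/
theorem linear_contracts_L1_cover
    (n m s : ℕ) (hn : 0 < n) (hm : 2 ≤ m) (hs : 0 < s)
    (f : Fin s → Fin n → Fin m → ℝ) (c : Fin s → Fin n → ℝ) (r : Fin m → ℝ)
    (hf_nonneg : ∀ i a j, 0 ≤ f i a j) (hf_sum : ∀ i a, ∑ j, f i a j = 1)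
    (hc_nonneg : ∀ i a, 0 ≤ c i a) (hc_zero : ∀ i, c i ⟨0, hn⟩ = 0)
    (hr : ∀ j, r j ∈ Set.Icc (0:ℝ) 1)
    (astar : Fin s → ℝ → Fin n)
    (h_best : ∀ i : Fin s, ∀ α : ℝ, ∀ a : Fin n,
      (∑ j, f i a j * (α * r j)) - c i a ≤
        (∑ j, f i (astar i α) j * (α * r j)) - c i (astar i α))
    (h_tie : ∀ i : Fin s, ∀ α : ℝ, ∀ a : Fin n,
      (∑ j, f i a j * (α * r j)) - c i a =
        (∑ j, f i (astar i α) j * (α * r j)) - c i (astar i α) →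
      ∑ j, f i a j * r j ≤ ∑ j, f i (astar i α) j * r j)
    (ν : ℝ) (hν0 : 0 < ν) (hν1 : ν < 1) :
    ∃ C : Finset ℝ, ↑C ⊆ Set.Icc (0:ℝ) 1 ∧ (C.card : ℝ) ≤ 12 / ν ∧
      ∀ α ∈ Set.Icc (0:ℝ) 1, ∃ αh ∈ C,
        (1 / (s:ℝ)) * ∑ i,
            |(1 - α) * ∑ j, f i (astar i α) j * r j -
              (1 - αh) * ∑ j, f i (astar i αh) j * r j| ≤ ν := by
  have hkey : ∀ i a (β : ℝ), ∑ j, f i a j * (β * r j) = β * ∑ j, f i a j * r j := by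
    intro i a β
    rw [Finset.mul_sum]
    exact Finset.sum_congr rfl (fun j _ => by ring)
  have hR0 : ∀ (i : Fin s) (β : ℝ), 0 ≤ ∑ j, f i (astar i β) j * r j := by
    intro i β
    exact Finset.sum_nonneg (fun j _ => mul_nonneg (hf_nonneg i _ j) (hr j).1)
  have hR1 : ∀ (i : Fin s) (β : ℝ), ∑ j, f i (astar i β) j * r j ≤ 1 := by
    intro i β
    calc ∑ j, f i (astar i β) j * r j ≤ ∑ j, f i (astar i β) j :=
          Finset.sum_le_sum (fun j _ => by
            nlinarith [hf_nonneg i (astar i β) j, (hr j).1, (hr j).2])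
      _ = 1 := hf_sum i _
  have hmono : ∀ (i : Fin s) (β β' : ℝ), β ≤ β' →
      ∑ j, f i (astar i β) j * r j ≤ ∑ j, f i (astar i β') j * r j := by
    intro i β β' hle
    rcases eq_or_lt_of_le hle with rfl | hlt
    · exact le_refl _
    · have h1 := h_best i β (astar i β')
      have h2 := h_best i β' (astar i β)
      rw [hkey, hkey] at h1 h2
      nlinarith
  exact cover_aux s hs (fun i β => ∑ j, f i (astar i β) j * r j) hR0 hR1 hmono ν hν0 hν1
end
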